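/- arXiv:2009.13307 — 2 statements merged into one kernel-verified Lean document; each statement's English description precedes it below -/
import Mathlib

section
/- For positive integers n, n_i, q with q ≥ 2 and any string S of length n over an alphabet of size q, the number of strings obtainable from S by exactly n_i insertions equals the sum over i from 0 to n_i of (n+n_i choose i)·(q-1)^i; in particular this count is independent of S. -/
/-!
Split the words of length `m + 1` containing `s :: L` by their first letter: if it is `s`, matching
it with `s` loses nothing, so the remaining word must contain `L`; otherwise the remaining word must
contain all of `s :: L`. Hence the ball sizes `B(m, L)` satisfy
`B(m + 1, s :: L) = (q - 1) B(m, s :: L) + B(m, L)`, with `B(m, []) = q ^ m` and `B(m, L) = 0`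
for `m < |L|`. By Pascal's rule the partial binomial sums `∑_{i ≤ m - |L|} C(m, i) (q - 1) ^ i`
satisfy the same recursion.
-/

open Finset

theorem List.cons_sublist_cons_iff_of_ne {α : Type*} {a b : α} {l₁ l₂ : List α} (h : a ≠ b) :
    (a :: l₁).Sublist (b :: l₂) ↔ (a :: l₁).Sublist l₂ := by
  simp [List.sublist_cons_iff, h]

theorem sum_range_choose_succ_mul_pow {R : Type*} [CommSemiring R] (N k : ℕ) (x : R) :
    ∑ i ∈ range (k + 1), ((N + 1).choose i : R) * x ^ i =
      x * ∑ i ∈ range k, (N.choose i : R) * x ^ i + ∑ i ∈ range (k + 1), (N.choose i : R) * x ^ i := by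
  induction k with
  | zero => simp
  | succ k ih =>
    rw [sum_range_succ (fun i => ((N + 1).choose i : R) * x ^ i), ih,
      sum_range_succ (fun i => (N.choose i : R) * x ^ i) (k + 1),
      sum_range_succ (fun i => (N.choose i : R) * x ^ i) k, Nat.choose_succ_succ, Nat.cast_add]
    ring

theorem sum_range_choose_mul_pow_eq_pow {R : Type*} [CommSemiring R] (N : ℕ) (x : R) :
    ∑ i ∈ range (N + 1), (N.choose i : R) * x ^ i = (x + 1) ^ N := by
  simp [add_pow, mul_comm]

section InsertionBall

variable (α : Type*) [Fintype α] [DecidableEq α]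

/-- The insertion ball of radius `m - L.length` around `L`. -/
def insertionBall (m : ℕ) (L : List α) : Finset (Fin m → α) :=
  {T | L.Sublist (List.ofFn T)}

variable {α}

theorem insertionBall_eq_empty_of_lt {m : ℕ} {L : List α} (h : m < L.length) :
    insertionBall α m L = ∅ := by
  refine filter_eq_empty_iff.mpr fun T _ hT => ?_
  simpa using (hT.length_le.trans_lt (by simpa using h)).ne rfl

theorem card_insertionBall_nil (m : ℕ) : #(insertionBall α m []) = Fintype.card α ^ m := by
  simp [insertionBall]

theorem card_insertionBall_succ_cons (m : ℕ) (s : α) (L : List α) :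
    #(insertionBall α (m + 1) (s :: L)) =
      (Fintype.card α - 1) * #(insertionBall α m (s :: L)) + #(insertionBall α m L) := by
  have by_first_letter (t : α) :
      (∑ f : Fin m → α, if (s :: L).Sublist (t :: List.ofFn f) then 1 else 0) =
        if t = s then #(insertionBall α m L) else #(insertionBall α m (s :: L)) := by
    split_ifs with h
    · simp [insertionBall, sum_boole, h]
    · simp [insertionBall, sum_boole, List.cons_sublist_cons_iff_of_ne (Ne.symm h)]
  rw [insertionBall, card_filter, ← (Fin.consEquiv fun _ => α).sum_comp, Fintype.sum_prod_type]
  simp only [Fin.consEquiv, Equiv.coe_fn_mk, List.ofFn_cons, by_first_letter]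
  rw [Fintype.sum_eq_add_sum_compl s, if_pos rfl,
    sum_congr rfl fun t ht => if_neg (by simpa using ht), sum_const, card_compl,
    card_singleton, smul_eq_mul, add_comm]

theorem card_insertionBall [Nonempty α] (L : List α) (k : ℕ) :
    #(insertionBall α (L.length + k) L) =
      ∑ i ∈ range (k + 1), (L.length + k).choose i * (Fintype.card α - 1) ^ i := by
  induction L generalizing k with
  | nil =>
    have := sum_range_choose_mul_pow_eq_pow k (Fintype.card α - 1)
    rw [Nat.sub_one_add_one Fintype.card_ne_zero] at this
    simpa [card_insertionBall_nil] using this.symm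
  | cons s L ih =>
    induction k with
    | zero =>
      simpa [card_insertionBall_succ_cons, insertionBall_eq_empty_of_lt] using ih 0
    | succ k ihk =>
      have hlen : (s :: L).length + k = L.length + (k + 1) := by
        rw [List.length_cons, Nat.add_right_comm, Nat.add_assoc]
      rw [hlen] at ihk
      rw [← Nat.add_assoc, hlen, card_insertionBall_succ_cons, ihk, ih]
      exact_mod_cast (sum_range_choose_succ_mul_pow _ (k + 1) (Fintype.card α - 1)).symm

end InsertionBall

theorem insertion_ball_size_general (n ni q : ℕ) (hq : 2 ≤ q)
    (S : List (Fin q)) (hS : S.length = n) :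
    (Finset.univ.filter
        (fun T : Fin (n + ni) → Fin q => S.Sublist (List.ofFn T))).card
      = ∑ i ∈ Finset.range (ni + 1), (n + ni).choose i * (q - 1) ^ i := by
  have : Nonempty (Fin q) := ⟨⟨0, by omega⟩⟩
  subst hS
  have h := card_insertionBall S ni
  rwa [Fintype.card_fin] at h

/-- Levenshtein's formula: the number of strings of length `n + ni` over an alphabet of
size `q` that contain a fixed string `S` of length `n` as a subsequence (i.e. the size of
the insertion ball of radius `ni` around `S`) equals `∑_{i=0}^{ni} C(n+ni, i) (q-1)^i`,
independently of `S`. -/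
theorem insertion_ball_size (n ni q : ℕ) (hn : 0 < n) (hni : 0 < ni) (hq : 2 ≤ q)
    (S : List (Fin q)) (hS : S.length = n) :
    (Finset.univ.filter
        (fun T : Fin (n + ni) → Fin q => S.Sublist (List.ofFn T))).card
      = ∑ i ∈ Finset.range (ni + 1), (n + ni).choose i * (q - 1) ^ i :=
  insertion_ball_size_general n ni q hq S hS
end

section
/- Let q ≥ 2 be an integer, 0 < δ < 1-1/q and 0 < γ < (1-δ)(q-qδ-1). Then the determinant of the Hessian of f at (γ,δ), which equals [(1-δ)²(q-qδ-1)² - γ²] / [γ(1-δ)²(1-δ+γ)(q-qδ-1)² (log q)²], is nonnegative. -/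
/-- On the interior of the domain, the determinant of the Hessian of `f` at `(γ,δ)`,
which equals `((1-δ)²(q-qδ-1)² - γ²)/(γ(1-δ)²(1-δ+γ)(q-qδ-1)²(log q)²)`, is nonnegative. -/
theorem hessian_det_nonneg (q : ℕ) (hq : 2 ≤ q) (γ δ : ℝ)
    (hδ0 : 0 < δ) (hδ1 : δ < 1 - 1 / q)
    (hγ0 : 0 < γ) (hγ1 : γ < (1 - δ) * ((q : ℝ) - (q : ℝ) * δ - 1)) :
    0 ≤ ((1 - δ) ^ 2 * ((q : ℝ) - (q : ℝ) * δ - 1) ^ 2 - γ ^ 2)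
        / (γ * (1 - δ) ^ 2 * (1 - δ + γ) * ((q : ℝ) - (q : ℝ) * δ - 1) ^ 2
            * (Real.log q) ^ 2) := by
  have hq1 : (1 : ℝ) < q := by exact_mod_cast hq.trans_lt' one_lt_two
  have hδ1' : δ < 1 := hδ1.trans_le (by
    have : (0:ℝ) < 1 / q := by positivity
    linarith)
  have h1δ : 0 < 1 - δ := by linarith
  have hA : 0 < (q : ℝ) - (q : ℝ) * δ - 1 := by
    have hq0 : (0:ℝ) < q := by linarith
    have hqq : (q:ℝ) * (1/q) = 1 := by field_simp
    nlinarith [mul_lt_mul_of_pos_left hδ1 hq0]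
  have hnum : 0 ≤ (1 - δ) ^ 2 * ((q : ℝ) - (q : ℝ) * δ - 1) ^ 2 - γ ^ 2 := by
    nlinarith [mul_pos h1δ hA]
  have hlog : 0 < Real.log q := Real.log_pos hq1
  have hden : 0 < γ * (1 - δ) ^ 2 * (1 - δ + γ) * ((q : ℝ) - (q : ℝ) * δ - 1) ^ 2
      * (Real.log q) ^ 2 := by positivity
  exact div_nonneg hnum hden.le
end
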